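/- arXiv:2204.10259 — 2 statements merged into one kernel-verified Lean document; each statement's English description precedes it below -/
import Mathlib

section
/- For any involution π in the symmetric group S_n, the number inv(π) + exc(π) is even, where inv(π) is the number of inversions of π and exc(π) is the number of excedances of π (indices i with π(i) > i). -/
/-- A clan of length `n`, represented canonically (up to the identification of
clans having the same signs in the same positions and pairs of equal numbers in
the same positions): `sign i = some true` means the symbol `+` at position `i`,
`sign i = some false` means `-`, and `sign i = none` means a natural number,
whose unique partner position (carrying the equal number) is `mate i`. -/
structure Clan (n : ℕ) where
  sign : Fin n → Option Bool
  mate : Fin n → Fin n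
  invol : ∀ i, mate (mate i) = i
  fixed_iff : ∀ i, mate i = i ↔ (sign i).isSome

namespace Clan

variable {n m : ℕ}

/-- The number of `+` signs in a clan. -/
def plusCount (c : Clan n) : ℕ := (Finset.univ.filter fun i => c.sign i = some true).card

/-- The number of `-` signs in a clan. -/
def minusCount (c : Clan n) : ℕ := (Finset.univ.filter fun i => c.sign i = some false).card

/-- The number of pairs of equal natural numbers in a clan. -/
def pairCount (c : Clan n) : ℕ := (Finset.univ.filter fun i => i < c.mate i).card

/-- A clan has signature `(p,q)` if the number of `+` signs plus the number of
distinct numbers is `p`, and the number of `-` signs plus the number of distinct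
numbers is `q`. -/
def HasSignature (c : Clan n) (p q : ℕ) : Prop :=
  c.plusCount + c.pairCount = p ∧ c.minusCount + c.pairCount = q

/-- A symmetric clan: signs are preserved under `i ↦ n+1-i`, no pair of equal
numbers sits at positions `i, n+1-i`, and pairs map to pairs under `i ↦ n+1-i`. -/
def IsSymmetric (c : Clan n) : Prop :=
  (∀ i, (c.sign i).isSome → c.sign i.rev = c.sign i) ∧
  (∀ i, c.mate i ≠ i → c.mate i ≠ i.rev ∧ c.mate i.rev = (c.mate i).rev)

/-- A skew-symmetric clan: signs are reversed under `i ↦ n+1-i` and pairs map to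
pairs (with no condition ruling out a pair at `i, n+1-i`). -/
def IsSkewSymmetric (c : Clan n) : Prop :=
  (∀ i b, c.sign i = some b → c.sign i.rev = some (!b)) ∧
  (∀ i, c.mate i ≠ i → c.mate i.rev = (c.mate i).rev)

/-- The reverse `(c_n, …, c_1)` of a clan `(c_1, …, c_n)`. -/
def reverse (c : Clan n) : Clan n where
  sign i := c.sign i.rev
  mate i := (c.mate i.rev).rev
  invol i := by simp [Fin.rev_rev, c.invol]
  fixed_iff i := by
    constructor
    · intro h
      rw [← c.fixed_iff i.rev]
      have := congrArg Fin.rev h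
      rwa [Fin.rev_rev] at this
    · intro h
      rw [← c.fixed_iff i.rev] at h
      show (c.mate i.rev).rev = i
      rw [h, Fin.rev_rev]

/-- The statistic `ℓ(c) = Σ_{c_i = c_j ∈ ℕ, i<j} (j - i - #{k ∈ ℕ : c_s = c_t = k
for some s < i < t < j})`. -/
def ell (c : Clan n) : ℕ :=
  ∑ i ∈ Finset.univ.filter (fun i => i < c.mate i),
    ((c.mate i : ℕ) - (i : ℕ) -
      (Finset.univ.filter fun s : Fin n =>
        s < c.mate s ∧ s < i ∧ i < c.mate s ∧ c.mate s < c.mate i).card)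

/-- Clan pattern inclusion: `c` includes the clan `d` if there is a strictly
increasing choice of positions along which the subsequence of `c` is a clan
identified with `d` (same signs in the same positions, same pairs of equal
numbers in the same positions). -/
def Includes (c : Clan n) (d : Clan m) : Prop :=
  ∃ k : Fin m → Fin n, StrictMono k ∧ (∀ a, c.sign (k a) = d.sign a) ∧
    ∀ a b : Fin m, c.mate (k a) = k b ↔ d.mate a = b

/-- `c` avoids the pattern `d` if it does not include it. -/
def Avoids (c : Clan n) (d : Clan m) : Prop := ¬ c.Includes d

/-- The number of `+` signs among the first `m` entries plus the number of pairs
of equal numbers both of whose positions are among the first `m` entries. -/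
def halfCount (c : Clan n) (m : ℕ) : ℕ :=
  (Finset.univ.filter fun i : Fin n => (i : ℕ) < m ∧ c.sign i = some true).card
  + (Finset.univ.filter fun i => i < c.mate i ∧ (c.mate i : ℕ) < m).card

end Clan

/-- The pattern `(1,2,1,2)`: two interleaved pairs of equal numbers. -/
def pattern1212 : Clan 4 :=
  ⟨![none, none, none, none], ![2, 3, 0, 1], by decide, by decide⟩

/-- Classical (Schubert-variety) pattern inclusion for permutations. -/
def PermIncludes {n m : ℕ} (w : Equiv.Perm (Fin n)) (v : Fin m → Fin m) : Prop :=
  ∃ k : Fin m → Fin n, StrictMono k ∧ ∀ a b : Fin m, w (k a) < w (k b) ↔ v a < v b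

/-- Involution pattern inclusion (symmetric-variety sense): the chosen index set
must in addition be stable under the involution. -/
def InvolIncludes {n m : ℕ} (π : Equiv.Perm (Fin n)) (μ : Fin m → Fin m) : Prop :=
  ∃ k : Fin m → Fin n, StrictMono k ∧ (∀ a, ∃ b, π (k a) = k b) ∧
    ∀ a b : Fin m, π (k a) < π (k b) ↔ μ a < μ b

/-- Bruhat–Chevalley order on `S_n` via Ehresmann's tableau criterion, in
counting form: `v ≤ w` iff every prefix of `v`, rearranged increasingly, is
entrywise at most the corresponding rearranged prefix of `w`; equivalently, for
all thresholds each prefix of `w` has at least as many large values. -/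
def BruhatLE {n : ℕ} (v w : Equiv.Perm (Fin n)) : Prop :=
  ∀ i a : Fin n,
    (Finset.univ.filter fun j => j ≤ i ∧ a ≤ v j).card ≤
      (Finset.univ.filter fun j => j ≤ i ∧ a ≤ w j).card

/-- The suffix `v(i), …, v(n)` of a signed permutation, rearranged in increasing
order. -/
def sortedSuffix {n : ℕ} (v : Fin n → ℤ) (i : Fin n) : List ℤ :=
  List.insertionSort (· ≤ ·) (((List.finRange n).filter fun j => i ≤ j).map v)

/-- Proctor's criterion for Bruhat order on signed permutations in type `D`:
the type-`C` tableau criterion together with the parity condition. -/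
def DBruhatLE {n : ℕ} (v w : Fin n → ℤ) : Prop :=
  ∀ i : Fin n,
    (∀ j : ℕ, (sortedSuffix w i).getD j 0 ≤ (sortedSuffix v i).getD j 0) ∧
    ∀ k : ℕ,
      (((sortedSuffix v i).take k).map Int.natAbs).toFinset = Finset.Icc 1 k →
      (((sortedSuffix w i).take k).map Int.natAbs).toFinset = Finset.Icc 1 k →
      (((sortedSuffix v i).take k).countP fun x => decide (x < 0)) % 2 =
        (((sortedSuffix w i).take k).countP fun x => decide (x < 0)) % 2

/-!
For an involution `σ`, the map `(i, j) ↦ (σ j, σ i)` is an involution of the set of inversions.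
Its fixed points are exactly the pairs `(i, σ i)` with `i < σ i`, i.e. the excedances, and the
remaining inversions come in pairs; hence `inv σ ≡ exc σ (mod 2)`.
-/

open Finset

theorem Finset.even_card_filter_ne_of_involution {α : Type*} [DecidableEq α] {s : Finset α}
    (g : α → α) (hg_mem : ∀ a ∈ s, g a ∈ s) (hg : ∀ a ∈ s, g (g a) = a) :
    Even #{a ∈ s | g a ≠ a} := by
  rw [← ZMod.natCast_eq_zero_iff_even, card_eq_sum_ones, Nat.cast_sum, Nat.cast_one]
  refine sum_involution (fun a _ ↦ g a) (fun _ _ ↦ by decide) (fun a ha _ ↦ (mem_filter.1 ha).2)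
    (fun a ha ↦ ?_) (fun a ha ↦ hg a (mem_filter.1 ha).1)
  obtain ⟨has, hga⟩ := mem_filter.1 ha
  exact mem_filter.2 ⟨hg_mem a has, fun h ↦ hga (by rw [← h, hg a has])⟩

theorem Finset.even_card_add_card_filter_eq_of_involution {α : Type*} [DecidableEq α]
    {s : Finset α} (g : α → α) (hg_mem : ∀ a ∈ s, g a ∈ s) (hg : ∀ a ∈ s, g (g a) = a) :
    Even (#s + #{a ∈ s | g a = a}) := by
  rw [← card_filter_add_card_filter_not (fun a ↦ g a = a), add_comm #_, add_assoc, ← two_mul]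
  exact (s.even_card_filter_ne_of_involution g hg_mem hg).add (even_two_mul _)

namespace Equiv.Perm

variable {α : Type*} [Fintype α] [LinearOrder α] {σ : Perm α}

def inversions (σ : Perm α) : Finset (α × α) := {p | p.1 < p.2 ∧ σ p.2 < σ p.1}

def excedances (σ : Perm α) : Finset α := {i | i < σ i}

theorem swap_mem_inversions_of_involutive (hσ : Function.Involutive σ) {p : α × α}
    (hp : p ∈ σ.inversions) : (σ p.2, σ p.1) ∈ σ.inversions := by
  simp only [inversions, mem_filter_univ, hσ _] at hp ⊢
  exact ⟨hp.2, hp.1⟩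

theorem card_swap_fixed_inversions_eq_card_excedances (hσ : Function.Involutive σ) :
    #{p ∈ σ.inversions | (σ p.2, σ p.1) = p} = #σ.excedances := by
  refine card_bij' (fun p _ ↦ p.1) (fun i _ ↦ (i, σ i)) ?_ ?_ ?_ fun _ _ ↦ rfl
  · rintro ⟨i, j⟩ hp
    simp only [inversions, excedances, mem_filter, mem_univ, true_and, Prod.mk.injEq] at hp ⊢
    exact hp.2.2 ▸ hp.1.1
  · intro i hi
    simp only [inversions, excedances, mem_filter, mem_univ, true_and, hσ _] at hi ⊢
    exact ⟨⟨hi, hi⟩, trivial⟩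
  · rintro ⟨i, j⟩ hp
    simp only [mem_filter, Prod.mk.injEq] at hp
    simp [hp.2.2]

theorem even_card_inversions_add_card_excedances (hσ : Function.Involutive σ) :
    Even (#σ.inversions + #σ.excedances) := by
  rw [← card_swap_fixed_inversions_eq_card_excedances hσ]
  exact even_card_add_card_filter_eq_of_involution _
    (fun _ ↦ swap_mem_inversions_of_involutive hσ) (fun p _ ↦ by simp [hσ _])

end Equiv.Perm

/-- For any involution `π ∈ S_n`, the number `inv(π) + exc(π)` is even, where `inv` is
the number of inversions and `exc` the number of excedances. -/
theorem inv_add_exc_even (n : ℕ) (π : Equiv.Perm (Fin n)) (hπ : π * π = 1) :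
    Even ((Finset.univ.filter fun p : Fin n × Fin n => p.1 < p.2 ∧ π p.2 < π p.1).card +
      (Finset.univ.filter fun i : Fin n => i < π i).card) :=
  π.even_card_inversions_add_card_excedances fun i ↦ congr($hπ i)
end

section
/- For every involution π in S_n, the quantity Σ_{i < π(i)} (π(i) - i - #{k : i < k < π(i) and π(k) < i}) equals (inv(π) + exc(π))/2, where inv(π) is the number of inversions of π and exc(π) is the number of excedances of π. -/
/-!
The map `(a, b) ↦ (π b, π a)` is an involution on the inversions of `π` whose fixed points are
the pairs `(i, π i)` with `i < π i`, so `inv(π) = exc(π) + 2 N`, where `N` counts the inversions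
`(a, b)` with `a < π b` (exactly one per free orbit). On the other side, since `π k ≠ i` for `k`
strictly inside the arc `(i, π i)`, the summand of that arc is `1 + #{k : i < k < π i, i < π k}`,
and `(i, k) ↦ (i, π k)` identifies these pairs with the inversions counted by `N`. Both sides
therefore equal `exc(π) + N`.
-/

open Finset

section Involution

variable {α : Type*} [LinearOrder α] [Fintype α]

def inversions (π : α → α) : Finset (α × α) :=
  univ.filter fun p => p.1 < p.2 ∧ π p.2 < π p.1

def excedances (π : α → α) : Finset α :=
  univ.filter fun i => i < π i

variable {π : α → α}

@[simp]
lemma mem_inversions {p : α × α} : p ∈ inversions π ↔ p.1 < p.2 ∧ π p.2 < π p.1 := by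
  simp [inversions]

@[simp]
lemma mem_excedances {i : α} : i ∈ excedances π ↔ i < π i := by
  simp [excedances]

lemma card_inversions_filter_eq_apply (hπ : Function.Involutive π) :
    #((inversions π).filter fun p => p.1 = π p.2) = #(excedances π) := by
  refine card_nbij' Prod.fst (fun i => (i, π i)) ?_ ?_ ?_ ?_
  · rintro ⟨a, b⟩ h
    simp only [coe_filter, mem_inversions, Set.mem_ofPred] at h
    obtain ⟨⟨hab, -⟩, rfl⟩ := h
    simpa [hπ b] using hab
  all_goals simp +contextual [Set.MapsTo, Set.LeftInvOn, Set.RightInvOn, hπ _, Prod.ext_iff]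

lemma card_inversions_filter_apply_lt (hπ : Function.Involutive π) :
    #((inversions π).filter fun p => π p.2 < p.1) =
      #((inversions π).filter fun p => p.1 < π p.2) := by
  refine card_nbij' (fun p => (π p.2, π p.1)) (fun p => (π p.2, π p.1)) ?_ ?_ ?_ ?_ <;>
    simp +contextual [Set.MapsTo, Set.LeftInvOn, Set.RightInvOn, hπ _]

lemma card_inversions (hπ : Function.Involutive π) :
    #(inversions π) = #(excedances π) + 2 * #((inversions π).filter fun p => p.1 < π p.2) := by
  have hfixed := card_filter_add_card_filter_not (s := inversions π) (fun p => p.1 = π p.2)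
  have hfree := card_filter_add_card_filter_not
    (s := (inversions π).filter fun p => ¬p.1 = π p.2) (fun p => p.1 < π p.2)
  rw [filter_filter, filter_filter] at hfree
  have hlt : ((inversions π).filter fun p => ¬p.1 = π p.2 ∧ p.1 < π p.2) =
      (inversions π).filter fun p => p.1 < π p.2 :=
    filter_congr fun p _ => and_iff_right_of_imp LT.lt.ne
  have hgt : ((inversions π).filter fun p => ¬p.1 = π p.2 ∧ ¬p.1 < π p.2) =
      (inversions π).filter fun p => π p.2 < p.1 :=
    filter_congr fun p _ => by rw [← not_or, ← le_iff_eq_or_lt, not_le]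
  rw [hlt, hgt, card_inversions_filter_apply_lt hπ] at hfree
  rw [card_inversions_filter_eq_apply hπ] at hfixed
  omega

lemma sum_card_filter_lt_apply (hπ : Function.Involutive π) :
    ∑ i ∈ excedances π, #(univ.filter fun k => i < k ∧ k < π i ∧ i < π k) =
      #((inversions π).filter fun p => p.1 < π p.2) := calc
    _ = ∑ i, #(univ.filter fun k => i < k ∧ k < π i ∧ i < π k) :=
      sum_subset (subset_univ _) fun i _ hi => card_eq_zero.2 <|
        filter_eq_empty_iff.2 fun _ _ h => hi (mem_excedances.2 (h.1.trans h.2.1))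
    _ = #(univ.filter fun p : α × α => p.1 < p.2 ∧ p.2 < π p.1 ∧ p.1 < π p.2) := by
      simp only [card_filter, Fintype.sum_prod_type]
    _ = _ := by
      refine card_nbij' (fun p => (p.1, π p.2)) (fun p => (p.1, π p.2)) ?_ ?_ ?_ ?_ <;>
        simp +contextual [Set.MapsTo, Set.LeftInvOn, Set.RightInvOn, hπ _]

end Involution

lemma Fin.sub_sub_card_filter_apply_lt {n : ℕ} {π : Fin n → Fin n} (hπ : Function.Involutive π)
    {i : Fin n} (hi : i < π i) :
    (π i : ℕ) - i - #(univ.filter fun k => i < k ∧ k < π i ∧ π k < i) =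
      1 + #(univ.filter fun k => i < k ∧ k < π i ∧ i < π k) := by
  have hleft : univ.filter (fun k => i < k ∧ k < π i ∧ π k < i) =
      (Ioo i (π i)).filter fun k => π k < i := by
    ext k
    simp [and_assoc]
  have hright : univ.filter (fun k => i < k ∧ k < π i ∧ i < π k) =
      (Ioo i (π i)).filter fun k => ¬π k < i := by
    ext k
    simp only [mem_filter, mem_univ, true_and, mem_Ioo, not_lt, and_assoc]
    refine and_congr_right fun _ => and_congr_right fun hk => (Ne.le_iff_lt fun h => ?_).symm
    exact hk.ne (by rw [h, hπ k])
  have hpart := card_filter_add_card_filter_not (s := Ioo i (π i)) (fun k => π k < i)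
  rw [← hleft, ← hright, Fin.card_Ioo] at hpart
  have : (i : ℕ) < π i := hi
  omega

/-- For every involution `π ∈ S_n`,
`Σ_{i < π(i)} (π(i) - i - #{k : i < k < π(i), π(k) < i}) = (inv(π) + exc(π)) / 2`. -/
theorem rank_formula_involution (n : ℕ) (π : Equiv.Perm (Fin n)) (hπ : π * π = 1) :
    (∑ i ∈ Finset.univ.filter (fun i : Fin n => i < π i),
      ((π i : ℕ) - (i : ℕ) -
        (Finset.univ.filter fun k : Fin n => i < k ∧ k < π i ∧ π k < i).card)) =
    ((Finset.univ.filter fun p : Fin n × Fin n => p.1 < p.2 ∧ π p.2 < π p.1).card +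
      (Finset.univ.filter fun i : Fin n => i < π i).card) / 2 := by
  have hinv : Function.Involutive π := DFunLike.congr_fun hπ
  have hterm := fun i (hi : i ∈ excedances π) =>
    Fin.sub_sub_card_filter_apply_lt hinv (mem_excedances.1 hi)
  change ∑ i ∈ excedances π, _ = (#(inversions π) + #(excedances π)) / 2
  rw [sum_congr rfl hterm, sum_add_distrib, sum_const, smul_eq_mul, mul_one,
    sum_card_filter_lt_apply hinv, card_inversions hinv]
  omega
end
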